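/- The number of positive roots not orthogonal to the highest root θ equals 2h∨ − 3, where h∨ is the dual Coxeter number. -/

import Mathlib

open RealInnerProductSpace Finset
open scoped Classical

/-- The data of a reduced irreducible (crystallographic) root system of a
finite-dimensional complex simple Lie algebra, realized in a real inner
product space, together with a choice of positive roots and the highest
root `θ`, with the invariant form normalized so that `(θ,θ) = 2`. -/
structure SimpleRootData (V : Type*) [NormedAddCommGroup V]
    [InnerProductSpace ℝ V] [FiniteDimensional ℝ V] where
  /-- the set of roots Δ -/
  Δ : Finset V
  /-- the set of positive roots Δ₊ -/
  Pos : Finset V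
  /-- the highest root θ -/
  θ : V
  zero_not_mem : (0 : V) ∉ Δ
  span_eq_top : Submodule.span ℝ (Δ : Set V) = ⊤
  neg_mem : ∀ α ∈ Δ, -α ∈ Δ
  reflect_mem : ∀ α ∈ Δ, ∀ β ∈ Δ,
    β - (2 * (inner ℝ β α : ℝ) / (inner ℝ α α : ℝ)) • α ∈ Δ
  integral : ∀ α ∈ Δ, ∀ β ∈ Δ, ∃ n : ℤ, 2 * (inner ℝ β α : ℝ) / (inner ℝ α α : ℝ) = (n : ℝ)
  reduced : ∀ α ∈ Δ, ∀ t : ℝ, t • α ∈ Δ → t = 1 ∨ t = -1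
  /-- irreducibility (simplicity of the Lie algebra) -/
  irreducible : ∀ s ⊆ Δ, (∀ α ∈ s, ∀ β ∈ Δ, β ∉ s → (inner ℝ α β : ℝ) = 0) →
    s = ∅ ∨ s = Δ
  pos_subset : Pos ⊆ Δ
  pos_iff : ∀ α ∈ Δ, α ∈ Pos ↔ -α ∉ Pos
  pos_add : ∀ α ∈ Pos, ∀ β ∈ Pos, α + β ∈ Δ → α + β ∈ Pos
  θ_pos : θ ∈ Pos
  /-- θ is the highest root -/
  θ_highest : ∀ α ∈ Pos, θ + α ∉ Δ
  /-- normalization (θ,θ) = 2 -/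
  θ_norm : (inner ℝ θ θ : ℝ) = 2

namespace SimpleRootData

variable {V : Type*} [NormedAddCommGroup V] [InnerProductSpace ℝ V]
  [FiniteDimensional ℝ V] (D : SimpleRootData V)

/-- ρ, half the sum of the positive roots. -/
noncomputable def ρ : V := (2 : ℝ)⁻¹ • ∑ α ∈ D.Pos, α

/-- The dual Coxeter number h∨ = (ρ,θ) + 1. -/
noncomputable def h : ℝ := (inner ℝ D.ρ D.θ : ℝ) + 1

/-- The reflection r_θ in the highest root θ. -/
noncomputable def rθ (x : V) : V := x - (2 * (inner ℝ x D.θ : ℝ) / (inner ℝ D.θ D.θ : ℝ)) • D.θ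

/-- A positive root α is *special* if θ − α is also a root. -/
def IsSpecial (α : V) : Prop := α ∈ D.Pos ∧ D.θ - α ∈ D.Δ

/-- The set of special roots. -/
noncomputable def specials : Finset V :=
  D.Pos.filter fun α => D.θ - α ∈ D.Δ

/-- The set of positive roots not orthogonal to θ. -/
noncomputable def nonOrth : Finset V :=
  D.Pos.filter fun α => (inner ℝ α D.θ : ℝ) ≠ 0

end SimpleRootData

open SimpleRootData

variable {V : Type*} [NormedAddCommGroup V] [InnerProductSpace ℝ V]
  [FiniteDimensional ℝ V]

/-!
Pairing with the highest root: a positive root `α ≠ θ` has `⟪α, θ⟫ ∈ {0, 1}`, since it is a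
nonnegative integer, and `⟪α, θ⟫ = 2` would make `2θ - α = θ + (θ - α)` a root. Hence
`2 (h∨ - 1) = 2 ⟪ρ, θ⟫ = ∑_{α > 0} ⟪α, θ⟫` counts each non-orthogonal positive root once,
except `θ` itself, which counts twice.
-/

lemma eq_one_of_pos_of_lt_two {x : ℝ} (hx : ∃ n : ℤ, x = n) (h0 : 0 < x) (h2 : x < 2) :
    x = 1 := by
  obtain ⟨n, rfl⟩ := hx
  have h0' : 0 < n := by exact_mod_cast h0
  have h2' : n < 2 := by exact_mod_cast h2
  obtain rfl : n = 1 := by omega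
  exact Int.cast_one

namespace SimpleRootData

variable (D : SimpleRootData V)

lemma inner_self_pos {α : V} (hα : α ∈ D.Δ) : 0 < ⟪α, α⟫ :=
  real_inner_self_pos.mpr fun h => D.zero_not_mem (h ▸ hα)

lemma sub_mem_of_inner_pos_of_lt {α β : V} (hα : α ∈ D.Δ) (hβ : β ∈ D.Δ)
    (hpos : 0 < ⟪α, β⟫) (hlt : ⟪α, β⟫ < ⟪β, β⟫) : α - β ∈ D.Δ := by
  have hββ := D.inner_self_pos hβ
  have hcartan : 2 * ⟪α, β⟫ / ⟪β, β⟫ = 1 :=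
    eq_one_of_pos_of_lt_two (D.integral β hβ α hα) (by positivity)
      (by rwa [div_lt_iff₀ hββ, mul_lt_mul_iff_right₀ two_pos])
  simpa only [hcartan, one_smul] using D.reflect_mem β hβ α hα

lemma sub_mem_of_inner_pos {α β : V} (hα : α ∈ D.Δ) (hβ : β ∈ D.Δ)
    (hpos : 0 < ⟪α, β⟫) (hne : α ≠ β) : α - β ∈ D.Δ := by
  -- `‖α - β‖² > 0` forces `⟪α, β⟫` below `‖α‖²` or below `‖β‖²`.
  have hdist : 0 < ⟪α - β, α - β⟫ := real_inner_self_pos.mpr (sub_ne_zero.mpr hne)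
  rw [real_inner_sub_sub_self] at hdist
  by_cases hlt : ⟪α, β⟫ < ⟪β, β⟫
  · exact D.sub_mem_of_inner_pos_of_lt hα hβ hpos hlt
  · have hmem := D.sub_mem_of_inner_pos_of_lt hβ hα (by rwa [real_inner_comm])
      (by rw [real_inner_comm]; linarith)
    simpa using D.neg_mem _ hmem

lemma theta_mem : D.θ ∈ D.Δ := D.pos_subset D.θ_pos

lemma inner_theta_eq_int {α : V} (hα : α ∈ D.Δ) : ∃ n : ℤ, ⟪α, D.θ⟫ = n := by
  simpa only [D.θ_norm, mul_div_cancel_left₀ _ (two_ne_zero (α := ℝ))] using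
    D.integral D.θ D.theta_mem α hα

lemma inner_theta_nonneg {α : V} (hα : α ∈ D.Pos) : 0 ≤ ⟪α, D.θ⟫ := by
  by_contra! hneg
  have hne : α ≠ -D.θ := by
    rintro rfl
    exact (D.pos_iff _ D.theta_mem).mp D.θ_pos (by simpa using hα)
  have hmem := D.sub_mem_of_inner_pos (D.pos_subset hα) (D.neg_mem _ D.theta_mem)
    (by rw [inner_neg_right]; linarith) hne
  exact D.θ_highest α hα (by rwa [sub_neg_eq_add, add_comm] at hmem)

lemma theta_sub_mem_pos {α : V} (hα : α ∈ D.Pos) (hne : α ≠ D.θ)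
    (hpos : 0 < ⟪α, D.θ⟫) : D.θ - α ∈ D.Pos := by
  have hmem : D.θ - α ∈ D.Δ := D.sub_mem_of_inner_pos D.theta_mem (D.pos_subset hα)
    (by rwa [real_inner_comm]) hne.symm
  by_contra hnpos
  have hdiff : α - D.θ ∈ D.Pos := by
    rw [← neg_sub] at hnpos
    exact (D.pos_iff _ (by simpa using D.neg_mem _ hmem)).mpr hnpos
  exact D.θ_highest _ hdiff (by simpa using D.pos_subset hα)

lemma eq_theta_of_inner_theta_eq_two {α : V} (hα : α ∈ D.Pos) (h2 : ⟪α, D.θ⟫ = 2) :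
    α = D.θ := by
  by_contra hne
  have hsub := D.theta_sub_mem_pos hα hne (by rw [h2]; norm_num)
  have hrefl := D.reflect_mem D.θ D.theta_mem α (D.pos_subset hα)
  rw [h2, D.θ_norm] at hrefl
  have hmem : D.θ + (D.θ - α) ∈ D.Δ := by
    convert D.neg_mem _ hrefl using 1
    norm_num [two_smul]
    abel
  exact D.θ_highest _ hsub hmem

lemma inner_theta_eq_one {α : V} (hα : α ∈ D.nonOrth) (hne : α ≠ D.θ) :
    ⟪α, D.θ⟫ = 1 := by
  obtain ⟨hαpos, hα0⟩ := mem_filter.mp hα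
  have hpos : 0 < ⟪α, D.θ⟫ := lt_of_le_of_ne (D.inner_theta_nonneg hαpos) (Ne.symm hα0)
  have hle : ⟪α, D.θ⟫ ≤ 2 := by
    have := D.inner_theta_nonneg (D.theta_sub_mem_pos hαpos hne hpos)
    rw [inner_sub_left, D.θ_norm] at this
    linarith
  have hne2 : ⟪α, D.θ⟫ ≠ 2 := fun h2 => hne (D.eq_theta_of_inner_theta_eq_two hαpos h2)
  exact eq_one_of_pos_of_lt_two (D.inner_theta_eq_int (D.pos_subset hαpos)) hpos
    (lt_of_le_of_ne hle hne2)

lemma theta_mem_nonOrth : D.θ ∈ D.nonOrth :=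
  mem_filter.mpr ⟨D.θ_pos, by rw [D.θ_norm]; norm_num⟩

lemma sum_nonOrth_inner_theta :
    ∑ α ∈ D.nonOrth, ⟪α, D.θ⟫ = D.nonOrth.card + 1 := by
  rw [← sum_erase_add _ _ D.theta_mem_nonOrth, D.θ_norm,
    sum_congr rfl fun α hα => D.inner_theta_eq_one (mem_of_mem_erase hα) (ne_of_mem_erase hα),
    sum_const, nsmul_one, ← card_erase_add_one D.theta_mem_nonOrth, Nat.cast_succ]
  ring

lemma sum_pos_inner_theta : ∑ α ∈ D.Pos, ⟪α, D.θ⟫ = 2 * (D.h - 1) := by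
  rw [h, ρ, real_inner_smul_left, sum_inner]
  ring

end SimpleRootData

/-- the number of positive roots not orthogonal to θ
equals 2h∨ − 3. -/
theorem card_nonOrth (D : SimpleRootData V) :
    (D.nonOrth.card : ℝ) = 2 * D.h - 3 := by
  have hsum : ∑ α ∈ D.nonOrth, ⟪α, D.θ⟫ = ∑ α ∈ D.Pos, ⟪α, D.θ⟫ :=
    sum_filter_ne_zero D.Pos
  rw [D.sum_nonOrth_inner_theta, D.sum_pos_inner_theta] at hsum
  linarith
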